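/- arXiv:math/9808117 — 6 statements merged into one kernel-verified Lean document; each statement's English description precedes it below -/
import Mathlib

section
/- Let ν be an integral weight and E = E(ν) the irreducible finite-dimensional module with extremal weight ν. Define N_ν = {(α, m) ∈ R^+ × ℤ : -⟨ρ,α^∨⟩ ≤ m < -⟨ν+ρ,α^∨⟩}. Then for τ ∈ h*, there exist w ∈ W and a weight μ of E with μ > ν satisfying w·(τ+ν) = τ+μ with w a reflection s_α (α ∈ R) if and only if there exists (α, m) ∈ N_ν with ⟨τ, α^∨⟩ = m. In that case the weight is μ = ν − ⟨τ+ν+ρ, α^∨⟩α. -/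
/-!
The equation `s_β · (τ + ν) = τ + μ` forces `μ = ν - ⟨τ + ν + ρ, β^∨⟩ β`, a point of the line
through `ν` in direction `β`; replacing `β` by `-β` does not change it, so `β` may be taken
positive. On that line the weights of `E` above `ν` are exactly `ν + zβ` with
`0 < z ≤ -⟨ν, β^∨⟩`, and `z = -⟨τ + ν + ρ, β^∨⟩` turns this range into
`-⟨ρ, β^∨⟩ ≤ ⟨τ, β^∨⟩ < -⟨ν + ρ, β^∨⟩`.
-/

open Finset

theorem dot_reflection_eq_add_iff {k V : Type*} [Ring k] [AddCommGroup V] [Module k V]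
    (τ ν ρ μ β : V) (c : k) : (τ + ν + ρ) - c • β - ρ = τ + μ ↔ μ = ν - c • β := by
  constructor <;> intro h
  · rw [← add_right_inj τ, ← h]; abel
  · rw [h]; abel

theorem isWeight_sub_smul_and_lt_iff {k V : Type*} [Ring k] [AddCommGroup V] [Module k V]
    (isWeight : V → Prop) (lt' : V → V → Prop) (ν β : V) (n : ℤ)
    (hstring : ∀ z : ℤ, isWeight (ν + z • β) ↔ (min 0 (-n) ≤ z ∧ z ≤ max 0 (-n)))
    (hline : ∀ t : k, isWeight (ν + t • β) → ∃ z : ℤ, t = (z : k))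
    (hlt : ∀ z : ℤ, lt' ν (ν + z • β) ↔ 0 < z) (c : k) :
    isWeight (ν - c • β) ∧ lt' ν (ν - c • β) ↔ ∃ z : ℤ, 0 < z ∧ z ≤ -n ∧ c = -z := by
  have hcast : ∀ z : ℤ, ν + (z : k) • β = ν + z • β := fun z => by
    rw [Int.cast_smul_eq_zsmul]
  constructor
  · rintro ⟨hw, hl⟩
    rw [sub_eq_add_neg, ← neg_smul] at hw hl
    obtain ⟨z, hz⟩ := hline (-c) hw
    rw [hz, hcast] at hw hl
    have hpos := (hlt z).1 hl
    have hbounds := (hstring z).1 hw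
    exact ⟨z, hpos, by omega, by rw [← hz, neg_neg]⟩
  · rintro ⟨z, hpos, hle, rfl⟩
    rw [neg_smul, sub_neg_eq_add, hcast]
    exact ⟨(hstring z).2 ⟨by omega, by omega⟩, (hlt z).2 hpos⟩

theorem exists_pos_le_eq_neg_iff {k : Type*} [CommRing k] (x : k) (a b : ℤ) :
    (∃ z : ℤ, 0 < z ∧ z ≤ -a ∧ x + a + b = -(z : k)) ↔
      ∃ m : ℤ, -b ≤ m ∧ m < -(a + b) ∧ x = m := by
  constructor
  · rintro ⟨z, hpos, hle, hx⟩
    exact ⟨-z - a - b, by omega, by omega, by push_cast; linear_combination hx⟩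
  · rintro ⟨m, hlo, hhi, rfl⟩
    exact ⟨-m - a - b, by omega, by omega, by push_cast; ring⟩

theorem stmt4_general {k V : Type*} [Field k] [AddCommGroup V] [Module k V]
    (R Rplus : Finset V) (hsub : Rplus ⊆ R)
    (hRpm : ∀ β ∈ R, β ∈ Rplus ∨ -β ∈ Rplus)
    (pair : V → V → k)
    (hadd : ∀ a b β, pair (a + b) β = pair a β + pair b β)
    (hneg : ∀ a β, pair a (-β) = -pair a β)
    (ρ ν τ : V)
    (nν nρ : V → ℤ)
    (hν : ∀ β ∈ R, pair ν β = (nν β : k))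
    (hρ : ∀ β ∈ R, pair ρ β = (nρ β : k))
    (isWeight : V → Prop)
    (hstring : ∀ β ∈ Rplus, ∀ z : ℤ,
      isWeight (ν + z • β) ↔ (min 0 (-nν β) ≤ z ∧ z ≤ max 0 (-nν β)))
    (hline : ∀ β ∈ Rplus, ∀ t : k, isWeight (ν + t • β) → ∃ z : ℤ, t = (z : k))
    (lt' : V → V → Prop)
    (hlt : ∀ β ∈ Rplus, ∀ z : ℤ, lt' ν (ν + z • β) ↔ 0 < z) :
    ((∃ β ∈ R, ∃ μ, isWeight μ ∧ lt' ν μ ∧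
        ((τ + ν + ρ) - pair (τ + ν + ρ) β • β) - ρ = τ + μ) ↔
      (∃ β ∈ Rplus, ∃ m : ℤ, -(nρ β) ≤ m ∧ m < -(nν β + nρ β) ∧ pair τ β = (m : k)))
    ∧ (∀ β ∈ Rplus, ∀ μ, isWeight μ → lt' ν μ →
        ((τ + ν + ρ) - pair (τ + ν + ρ) β • β) - ρ = τ + μ →
        μ = ν - pair (τ + ν + ρ) β • β) := by
  have hroot : ∀ β ∈ Rplus, (∃ μ, isWeight μ ∧ lt' ν μ ∧ μ = ν - pair (τ + ν + ρ) β • β) ↔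
      ∃ m : ℤ, -(nρ β) ≤ m ∧ m < -(nν β + nρ β) ∧ pair τ β = (m : k) := by
    intro β hβ
    rw [exists_eq_right_right, isWeight_sub_smul_and_lt_iff isWeight lt' ν β (nν β)
      (hstring β hβ) (hline β hβ) (hlt β hβ), hadd, hadd, hν β (hsub hβ), hρ β (hsub hβ),
      exists_pos_le_eq_neg_iff]
  simp only [dot_reflection_eq_add_iff]
  refine ⟨⟨?_, ?_⟩, fun β _ μ _ _ hμ => hμ⟩
  · rintro ⟨β, hβR, hμ⟩
    rcases hRpm β hβR with hβ | hβ
    · exact ⟨β, hβ, (hroot β hβ).1 hμ⟩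
    · refine ⟨-β, hβ, (hroot (-β) hβ).1 ?_⟩
      simpa only [hneg, neg_smul_neg] using hμ
  · rintro ⟨β, hβ, hm⟩
    exact ⟨β, hsub hβ, (hroot β hβ).2 hm⟩

theorem stmt4 {k V : Type*} [Field k] [CharZero k] [AddCommGroup V] [Module k V]
    (R Rplus : Finset V) (hsub : Rplus ⊆ R)
    (hRpm : ∀ β ∈ R, β ∈ Rplus ∨ -β ∈ Rplus)
    (pair : V → V → k)
    (hadd : ∀ a b β, pair (a + b) β = pair a β + pair b β)
    (hneg : ∀ a β, pair a (-β) = -pair a β)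
    (ρ ν τ : V)
    (nν nρ : V → ℤ)
    (hν : ∀ β ∈ R, pair ν β = (nν β : k))
    (hρ : ∀ β ∈ R, pair ρ β = (nρ β : k))
    (isWeight : V → Prop) (hνw : isWeight ν)
    (hstring : ∀ β ∈ Rplus, ∀ z : ℤ,
      isWeight (ν + z • β) ↔ (min 0 (-nν β) ≤ z ∧ z ≤ max 0 (-nν β)))
    (hline : ∀ β ∈ Rplus, ∀ t : k, isWeight (ν + t • β) → ∃ z : ℤ, t = (z : k))
    (lt' : V → V → Prop)
    (hlt : ∀ β ∈ Rplus, ∀ z : ℤ, lt' ν (ν + z • β) ↔ 0 < z) :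
    ((∃ β ∈ R, ∃ μ, isWeight μ ∧ lt' ν μ ∧
        ((τ + ν + ρ) - pair (τ + ν + ρ) β • β) - ρ = τ + μ) ↔
      (∃ β ∈ Rplus, ∃ m : ℤ, -(nρ β) ≤ m ∧ m < -(nν β + nρ β) ∧ pair τ β = (m : k)))
    ∧ (∀ β ∈ Rplus, ∀ μ, isWeight μ → lt' ν μ →
        ((τ + ν + ρ) - pair (τ + ν + ρ) β • β) - ρ = τ + μ →
        μ = ν - pair (τ + ν + ρ) β • β) :=
  stmt4_general R Rplus hsub hRpm pair hadd hneg ρ ν τ nν nρ hν hρ isWeight hstring hline lt' hlt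
end

section
/- Define for integral weights μ, ν and x in the Weyl group the triangle function by the closed formula Δ(μ,ν;x)(τ−ρ) = c·∏_{α∈R^+, xα∈R^-} ⟨τ,α^∨⟩^{ᾱ(ν)} ⟨τ+ν,α^∨⟩^{ᾱ(μ)} ⟨τ+ν+μ,α^∨⟩^{ᾱ(ν+μ)} / (⟨τ,α^∨⟩^{ᾱ(ν+μ)} ⟨τ+ν,α^∨⟩^{ᾱ(ν)} ⟨τ+ν+μ,α^∨⟩^{ᾱ(μ)}), where ᾱ(λ)=1 if ⟨λ,α^∨⟩<0 and 0 otherwise. Then these rational functions satisfy the Decomposition identity: Δ(η+μ, ν; x)(τ) · Δ(η, μ; x)(τ+ν) = Δ(η, μ+ν; x)(τ) · Δ(μ, ν; x)(τ) for all integral weights η, μ, ν and all x ∈ W. -/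
/-!
STATEMENT 9 (Decomposition identity): with Δ given by the closed product
formula, Δ(η+μ,ν;x)(τ)·Δ(η,μ;x)(τ+ν) = Δ(η,μ+ν;x)(τ)·Δ(μ,ν;x)(τ).
Coroot functionals `c` are indexed by the positive roots `ι`; `neg`
is the set {α ∈ R⁺ : xα ∈ R⁻} determined by x ∈ W; the integral weights
ν, μ, η have integer pairings `nν`, `nμ`, `nη`.  `Del c neg nν nμ ν μ τ'`
is the value Δ(μ,ν;x)(τ'-ρ) of the closed formula (with c = 1).
-/

open Finset

/-- ᾱ(λ) for the integer pairing value `n = ⟨λ,α^∨⟩`. -/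
def abar (n : ℤ) : ℕ := if n < 0 then 1 else 0

/-- The closed product formula: `Del c neg nν nμ ν μ τ = Δ(μ,ν;x)(τ-ρ)`,
where `neg = {α ∈ R⁺ : xα ∈ R⁻}`. -/
noncomputable def Del {k V ι : Type*} [Field k] [AddCommGroup V] [Module k V]
    (c : ι → V →ₗ[k] k) (neg : Finset ι) (nν nμ : ι → ℤ) (ν μ τ : V) : k :=
  ∏ α ∈ neg,
    ((c α τ) ^ abar (nν α) * (c α (τ + ν)) ^ abar (nμ α) *
        (c α (τ + ν + μ)) ^ abar (nν α + nμ α)) /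
      ((c α τ) ^ abar (nν α + nμ α) * (c α (τ + ν)) ^ abar (nν α) *
        (c α (τ + ν + μ)) ^ abar (nμ α))

/-!
Root by root, the closed formula is the coboundary
`φ_p(x, y) · φ_q(y, z) / φ_{p+q}(x, z)` of `φ_n(x, y) = (x / y) ^ ᾱ(n)`, evaluated at the
values `x, y, z` of the coroot at `τ, τ + ν, τ + ν + μ`. The decomposition identity is then the
cocycle identity of a coboundary, which holds for arbitrary nonzero values and integer exponents.
-/

section RootFactor

variable {k : Type*} [Field k]

def rootFactor (x y z : k) (p q : ℤ) : k :=
  x ^ abar p * y ^ abar q * z ^ abar (p + q) / (x ^ abar (p + q) * y ^ abar p * z ^ abar q)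

def ratioPow (n : ℤ) (x y : k) : k := (x / y) ^ abar n

lemma ratioPow_ne_zero {x y : k} (hx : x ≠ 0) (hy : y ≠ 0) (n : ℤ) : ratioPow n x y ≠ 0 :=
  pow_ne_zero _ (div_ne_zero hx hy)

lemma rootFactor_eq_coboundary {x y z : k} (hx : x ≠ 0) (hy : y ≠ 0) (hz : z ≠ 0) (p q : ℤ) :
    rootFactor x y z p q = ratioPow p x y * ratioPow q y z / ratioPow (p + q) x z := by
  unfold rootFactor ratioPow
  simp only [div_pow]
  field_simp

lemma rootFactor_cocycle {a b d e : k} (ha : a ≠ 0) (hb : b ≠ 0) (hd : d ≠ 0) (he : e ≠ 0)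
    (p q r : ℤ) :
    rootFactor a b e p (q + r) * rootFactor b d e q r =
      rootFactor a d e (p + q) r * rootFactor a b d p q := by
  rw [rootFactor_eq_coboundary ha hb he, rootFactor_eq_coboundary hb hd he,
    rootFactor_eq_coboundary ha hd he, rootFactor_eq_coboundary ha hb hd, ← add_assoc]
  field_simp [ratioPow_ne_zero hb he, ratioPow_ne_zero ha hd]

end RootFactor

lemma Del_eq_prod_rootFactor {k V ι : Type*} [Field k] [AddCommGroup V] [Module k V]
    (c : ι → V →ₗ[k] k) (neg : Finset ι) (nν nμ : ι → ℤ) (ν μ τ : V) :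
    Del c neg nν nμ ν μ τ =
      ∏ α ∈ neg, rootFactor (c α τ) (c α (τ + ν)) (c α (τ + ν + μ)) (nν α) (nμ α) :=
  rfl

theorem stmt9_general {k V ι : Type*} [Field k] [AddCommGroup V] [Module k V]
    (c : ι → V →ₗ[k] k) (neg : Finset ι) (ρ ν μ η : V) (nν nμ nη : ι → ℤ)
    (τ : V)
    (h0 : ∀ α ∈ neg, c α (τ + ρ) ≠ 0)
    (h1 : ∀ α ∈ neg, c α (τ + ρ + ν) ≠ 0)
    (h2 : ∀ α ∈ neg, c α (τ + ρ + ν + μ) ≠ 0)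
    (h3 : ∀ α ∈ neg, c α (τ + ρ + ν + μ + η) ≠ 0) :
    Del c neg nν (fun α => nη α + nμ α) ν (η + μ) (τ + ρ) *
        Del c neg nμ nη μ η (τ + ν + ρ) =
      Del c neg (fun α => nμ α + nν α) nη (μ + ν) η (τ + ρ) *
        Del c neg nν nμ ν μ (τ + ρ) := by
  simp only [Del_eq_prod_rootFactor, ← prod_mul_distrib]
  refine prod_congr rfl fun α hα => ?_
  rw [show τ + ν + ρ = τ + ρ + ν by abel, show τ + ρ + ν + (η + μ) = τ + ρ + ν + μ + η by abel,
    show τ + ρ + (μ + ν) = τ + ρ + ν + μ by abel, add_comm (nη α) (nμ α),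
    add_comm (nμ α) (nν α)]
  exact rootFactor_cocycle (h0 α hα) (h1 α hα) (h2 α hα) (h3 α hα) _ _ _

theorem stmt9 {k V ι : Type*} [Field k] [CharZero k] [AddCommGroup V] [Module k V]
    (c : ι → V →ₗ[k] k) (neg : Finset ι) (ρ ν μ η : V) (nν nμ nη : ι → ℤ)
    (hν : ∀ α, c α ν = (nν α : k)) (hμ : ∀ α, c α μ = (nμ α : k))
    (hη : ∀ α, c α η = (nη α : k))
    (τ : V)
    (h0 : ∀ α ∈ neg, c α (τ + ρ) ≠ 0)
    (h1 : ∀ α ∈ neg, c α (τ + ρ + ν) ≠ 0)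
    (h2 : ∀ α ∈ neg, c α (τ + ρ + ν + μ) ≠ 0)
    (h3 : ∀ α ∈ neg, c α (τ + ρ + ν + μ + η) ≠ 0) :
    Del c neg nν (fun α => nη α + nμ α) ν (η + μ) (τ + ρ) *
        Del c neg nμ nη μ η (τ + ν + ρ) =
      Del c neg (fun α => nμ α + nν α) nη (μ + ν) η (τ + ρ) *
        Del c neg nν nμ ν μ (τ + ρ) :=
  stmt9_general c neg ρ ν μ η nν nμ nη τ h0 h1 h2 h3
end

section
/- With Δ(μ,ν;x) given by the closed product formula above, the Rotation identity holds: Δ(yμ, yν; x)(y·τ) = Δ(μ,ν;y)(τ)^{-1} · Δ(μ,ν;xy)(τ) for all integral weights μ, ν, all x, y ∈ W, and generic τ (where y·τ = y(τ+ρ)−ρ). -/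
/-!
STATEMENT 10 (Rotation identity): with Δ given by the closed product formula
(c = 1), Δ(yμ,yν;x)(y·τ) = Δ(μ,ν;y)(τ)⁻¹ · Δ(μ,ν;xy)(τ) for generic τ.
Weyl group elements are encoded as in Statement 0: `w` together with a
permutation `σw` of the positive roots and signs `sw α = ±1` with
`⟨w λ, (σw α)^∨⟩ = sw α ⟨λ, α^∨⟩`; then {α ∈ R⁺ : wα ∈ R⁻} = {α : sw α = -1},
and the composite xy has permutation σx ∘ σy and sign α ↦ sx(σy α)·sy α.
The weight yν has integer pairings β ↦ sy(σy⁻¹β)·nν(σy⁻¹β).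
-/

open Finset

/-!
Write `f β` for the factor of `Δ(μ,ν;·)(τ)` at the root `β`. Because `y` permutes the roots up to
sign, the factor of `Δ(yμ,yν;x)(y·τ)` at `σy β` is obtained from `f β` by multiplying all its
entries and exponents by `sy β`; flipping the sign inverts the factor (the three linear forms
differ by the integers `⟨ν,β^∨⟩` and `⟨μ,β^∨⟩`), so it equals `f β ^ sy β`. The identity then
holds root by root, since `[sx (σy β) = -1] · sy β = [sx (σy β) · sy β = -1] - [sy β = -1]`.
-/

theorem pow_abar_neg_mul_pow_abar {M : Type*} [Monoid M] (x : M) (m : ℤ) :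
    x ^ abar (-m) * x ^ abar m = if m = 0 then 1 else x := by
  unfold abar
  split_ifs <;> first | omega | simp

theorem ite_shift_mul_comm {k : Type*} [CommRing k] {a b d : k} {n₁ n₂ : ℤ} (hab : b = a + n₁)
    (hbd : d = b + n₂) :
    (if n₁ = 0 then 1 else a) * (if n₂ = 0 then 1 else b) * (if n₁ + n₂ = 0 then 1 else d) =
      (if n₁ + n₂ = 0 then 1 else a) * (if n₁ = 0 then 1 else b) * (if n₂ = 0 then 1 else d) := by
  by_cases h₁ : n₁ = 0
  · simp [h₁, hab]
  by_cases h₂ : n₂ = 0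
  · simp [h₂, hbd, mul_comm]
  by_cases h₁₂ : n₁ + n₂ = 0
  · have hda : d = a := by
      rw [hbd, hab, add_assoc, ← Int.cast_add, h₁₂, Int.cast_zero, add_zero]
    simp [h₁, h₂, h₁₂, hda, mul_comm]
  · simp only [h₁, h₂, h₁₂, if_false]

section Factor

variable {k : Type*} [Field k]

def delFactor (a b d : k) (n₁ n₂ : ℤ) : k :=
  a ^ abar n₁ * b ^ abar n₂ * d ^ abar (n₁ + n₂) / (a ^ abar (n₁ + n₂) * b ^ abar n₁ * d ^ abar n₂)

theorem del_eq_prod_delFactor {V ι : Type*} [AddCommGroup V] [Module k V] (c : ι → V →ₗ[k] k)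
    (s : Finset ι) (nν nμ : ι → ℤ) (ν μ τ : V) :
    Del c s nν nμ ν μ τ =
      ∏ α ∈ s, delFactor (c α τ) (c α (τ + ν)) (c α (τ + ν + μ)) (nν α) (nμ α) :=
  rfl

theorem delFactor_ne_zero {a b d : k} (ha : a ≠ 0) (hb : b ≠ 0) (hd : d ≠ 0) (n₁ n₂ : ℤ) :
    delFactor a b d n₁ n₂ ≠ 0 := by
  simp [delFactor, ha, hb, hd]

theorem delFactor_neg {a b d : k} (ha : a ≠ 0) (hb : b ≠ 0) (hd : d ≠ 0) {n₁ n₂ : ℤ}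
    (hab : b = a + n₁) (hbd : d = b + n₂) :
    delFactor (-a) (-b) (-d) (-n₁) (-n₂) = (delFactor a b d n₁ n₂)⁻¹ := by
  have cross := ite_shift_mul_comm hab hbd
  simp only [← pow_abar_neg_mul_pow_abar] at cross
  unfold delFactor
  rw [inv_div, div_eq_div_iff (by simp [ha, hb, hd]) (by simp [ha, hb, hd]), ← neg_add]
  simp only [neg_pow (a := a), neg_pow (a := b), neg_pow (a := d)]
  -- numerator and denominator carry the same total power of `-1`
  linear_combination (-1 : k) ^ (abar (-n₁) + abar (-n₂) + abar (-(n₁ + n₂))) * cross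

theorem delFactor_sign_mul {a b d : k} (ha : a ≠ 0) (hb : b ≠ 0) (hd : d ≠ 0) {n₁ n₂ : ℤ}
    (hab : b = a + n₁) (hbd : d = b + n₂) {s : ℤ} (hs : s = 1 ∨ s = -1) :
    delFactor (s * a) (s * b) (s * d) (s * n₁) (s * n₂) = delFactor a b d n₁ n₂ ^ s := by
  rcases hs with rfl | rfl
  · simp
  · simpa using delFactor_neg ha hb hd hab hbd

end Factor

theorem ite_zpow_eq_inv_mul_ite {G : Type*} [GroupWithZero G] {f : G} (hf : f ≠ 0) {s t : ℤ}
    (hs : s = 1 ∨ s = -1) (ht : t = 1 ∨ t = -1) :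
    (if t = -1 then f ^ s else 1) = (if s = -1 then f else 1)⁻¹ * (if t * s = -1 then f else 1) := by
  rcases hs with rfl | rfl <;> rcases ht with rfl | rfl <;> simp [hf]

theorem prod_filter_zpow_eq_inv_mul {ι G : Type*} [CommGroupWithZero G] (S : Finset ι)
    {f : ι → G} (hf : ∀ β, f β ≠ 0) {s t : ι → ℤ} (hs : ∀ β, s β = 1 ∨ s β = -1)
    (ht : ∀ β, t β = 1 ∨ t β = -1) :
    ∏ β ∈ S with t β = -1, f β ^ s β =
      (∏ β ∈ S with s β = -1, f β)⁻¹ * ∏ β ∈ S with t β * s β = -1, f β := by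
  simp only [prod_filter, ← prod_inv_distrib, ← prod_mul_distrib]
  exact prod_congr rfl fun β _ ↦ ite_zpow_eq_inv_mul_ite (hf β) (hs β) (ht β)

theorem LinearMap.map_add_ne_zero_of_forall_ne_intCast {k V : Type*} [Field k] [AddCommGroup V]
    [Module k V] (φ : V →ₗ[k] k) {τ v : V} (hτ : ∀ n : ℤ, φ τ ≠ n) {n : ℤ} (hv : φ v = n) :
    φ (τ + v) ≠ 0 := by
  intro h
  apply hτ (-n)
  rw [map_add, hv] at h
  push_cast
  linear_combination h

theorem del_linearEquiv_eq_prod {k V ι : Type*} [Field k] [AddCommGroup V] [Module k V]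
    [Fintype ι] (c : ι → V →ₗ[k] k) (ν μ T : V) (nν nμ : ι → ℤ)
    (hν : ∀ α, c α ν = (nν α : k)) (hμ : ∀ α, c α μ = (nμ α : k))
    (hT₀ : ∀ β, c β T ≠ 0) (hT₁ : ∀ β, c β (T + ν) ≠ 0) (hT₂ : ∀ β, c β (T + ν + μ) ≠ 0)
    (y : V ≃ₗ[k] V) (σ : Equiv.Perm ι) (s : ι → ℤ) (hs : ∀ α, s α = 1 ∨ s α = -1)
    (hy : ∀ (α : ι) (l : V), c (σ α) (y l) = (s α : k) * c α l)
    (p : ι → Prop) [DecidablePred p] :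
    Del c (univ.filter p) (fun β ↦ s (σ.symm β) * nν (σ.symm β))
        (fun β ↦ s (σ.symm β) * nμ (σ.symm β)) (y ν) (y μ) (y T) =
      ∏ β ∈ univ with p (σ β),
        delFactor (c β T) (c β (T + ν)) (c β (T + ν + μ)) (nν β) (nμ β) ^ s β := by
  rw [del_eq_prod_delFactor]
  refine (prod_equiv σ (fun β ↦ by simp) fun β _ ↦ ?_).symm
  simp only [← map_add, hy, Equiv.symm_apply_apply]
  exact (delFactor_sign_mul (hT₀ β) (hT₁ β) (hT₂ β) (by rw [map_add, hν])
    (by rw [map_add, hμ]) (hs β)).symm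

theorem stmt10_general {k V ι : Type*} [Field k] [AddCommGroup V] [Module k V]
    [Fintype ι]
    (c : ι → V →ₗ[k] k) (ρ ν μ : V) (nν nμ nρ' : ι → ℤ)
    (hν : ∀ α, c α ν = (nν α : k)) (hμ : ∀ α, c α μ = (nμ α : k))
    (hρ : ∀ α, c α ρ = (nρ' α : k))
    (y : V ≃ₗ[k] V) (σy : Equiv.Perm ι) (sx sy : ι → ℤ)
    (hsx : ∀ α, sx α = 1 ∨ sx α = -1) (hsy : ∀ α, sy α = 1 ∨ sy α = -1)
    (hy : ∀ (α : ι) (l : V), c (σy α) (y l) = (sy α : k) * c α l)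
    (τ : V)
    -- genericity: ⟨τ,α^∨⟩ ∉ ℤ for all roots α
    (hgen : ∀ α, ∀ n : ℤ, c α τ ≠ (n : k)) :
    Del c (Finset.univ.filter fun α => sx α = -1)
        (fun β => sy (σy.symm β) * nν (σy.symm β))
        (fun β => sy (σy.symm β) * nμ (σy.symm β))
        (y ν) (y μ) (y (τ + ρ)) =
      (Del c (Finset.univ.filter fun α => sy α = -1) nν nμ ν μ (τ + ρ))⁻¹ *
        Del c (Finset.univ.filter fun α => sx (σy α) * sy α = -1) nν nμ ν μ (τ + ρ) := by
  have hT₀ β : c β (τ + ρ) ≠ 0 := (c β).map_add_ne_zero_of_forall_ne_intCast (hgen β) (hρ β)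
  have hT₁ β : c β (τ + ρ + ν) ≠ 0 := by
    rw [add_assoc]
    exact (c β).map_add_ne_zero_of_forall_ne_intCast (hgen β) (n := nρ' β + nν β)
      (by simp [hρ, hν])
  have hT₂ β : c β (τ + ρ + ν + μ) ≠ 0 := by
    rw [add_assoc, add_assoc]
    exact (c β).map_add_ne_zero_of_forall_ne_intCast (hgen β) (n := nρ' β + (nν β + nμ β))
      (by simp [hρ, hν, hμ])
  rw [del_linearEquiv_eq_prod c ν μ _ nν nμ hν hμ hT₀ hT₁ hT₂ y σy sy hsy hy,
    prod_filter_zpow_eq_inv_mul _ (fun β ↦ delFactor_ne_zero (hT₀ β) (hT₁ β) (hT₂ β) _ _) hsy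
      (fun β ↦ hsx (σy β))]
  simp only [del_eq_prod_delFactor]

theorem stmt10 {k V ι : Type*} [Field k] [CharZero k] [AddCommGroup V] [Module k V]
    [Fintype ι] [DecidableEq ι]
    (c : ι → V →ₗ[k] k) (ρ ν μ : V) (nν nμ nρ' : ι → ℤ)
    (hν : ∀ α, c α ν = (nν α : k)) (hμ : ∀ α, c α μ = (nμ α : k))
    (hρ : ∀ α, c α ρ = (nρ' α : k))
    (x y : V ≃ₗ[k] V) (σx σy : Equiv.Perm ι) (sx sy : ι → ℤ)
    (hsx : ∀ α, sx α = 1 ∨ sx α = -1) (hsy : ∀ α, sy α = 1 ∨ sy α = -1)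
    (hx : ∀ (α : ι) (l : V), c (σx α) (x l) = (sx α : k) * c α l)
    (hy : ∀ (α : ι) (l : V), c (σy α) (y l) = (sy α : k) * c α l)
    (τ : V)
    -- genericity: ⟨τ,α^∨⟩ ∉ ℤ for all roots α
    (hgen : ∀ α, ∀ n : ℤ, c α τ ≠ (n : k)) :
    Del c (Finset.univ.filter fun α => sx α = -1)
        (fun β => sy (σy.symm β) * nν (σy.symm β))
        (fun β => sy (σy.symm β) * nμ (σy.symm β))
        (y ν) (y μ) (y (τ + ρ)) =
      (Del c (Finset.univ.filter fun α => sy α = -1) nν nμ ν μ (τ + ρ))⁻¹ *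
        Del c (Finset.univ.filter fun α => sx (σy α) * sy α = -1) nν nμ ν μ (τ + ρ) :=
  stmt10_general c ρ ν μ nν nμ nρ' hν hμ hρ y σy sx sy hsx hsy hy τ hgen
end

section
/- With Δ(μ,ν;x) given by the closed product formula, the Flatness identity holds: if the integral weights ν and μ both lie in the closure of one and the same Weyl chamber (i.e. there is a chamber C with ⟨ν,α^∨⟩ and ⟨μ,α^∨⟩ weakly of the same sign pattern determined by C), then Δ(μ,ν;x) ≡ 1 for all x ∈ W (taking the normalizing constant c = 1). -/
/-!
Each factor of `Del` is `1` on its own. For a root `α` on which `ν` and `μ` are weakly of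
the same sign, either `ā(ν) = ā(μ) = ā(ν + μ)`, or one of `⟨ν,α^∨⟩`, `⟨μ,α^∨⟩` vanishes, in
which case the two arguments it separates coincide and `ā(ν + μ)` equals the other exponent.
Either way numerator and denominator are the same monomial in nonzero quantities.
-/

open Finset

theorem abar_of_nonneg {n : ℤ} (h : 0 ≤ n) : abar n = 0 :=
  if_neg h.not_gt

theorem abar_of_neg {n : ℤ} (h : n < 0) : abar n = 1 :=
  if_pos h

theorem pow_abar_numerator_eq_denominator {R : Type*} [CommRing R] {a b d : R} {m n : ℤ}
    (hb : b = a + m) (hd : d = b + n) (hsign : (0 ≤ m ∧ 0 ≤ n) ∨ (m ≤ 0 ∧ n ≤ 0)) :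
    a ^ abar m * b ^ abar n * d ^ abar (m + n) = a ^ abar (m + n) * b ^ abar m * d ^ abar n := by
  rcases hsign with ⟨hm, hn⟩ | ⟨hm, hn⟩
  · simp only [abar_of_nonneg hm, abar_of_nonneg hn, abar_of_nonneg (add_nonneg hm hn)]
  rcases hm.lt_or_eq with hm | rfl
  · rcases hn.lt_or_eq with hn | rfl
    · rw [abar_of_neg hm, abar_of_neg hn, abar_of_neg (add_neg hm hn)]
    · rw [hd, Int.cast_zero, add_zero, add_zero]
      ring
  · rw [hb, Int.cast_zero, add_zero, zero_add]
    ring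

theorem stmt11_general {k V ι : Type*} [Field k] [AddCommGroup V] [Module k V]
    (c : ι → V →ₗ[k] k) (ρ ν μ : V) (nν nμ : ι → ℤ)
    (hν : ∀ α, c α ν = (nν α : k)) (hμ : ∀ α, c α μ = (nμ α : k))
    -- ν and μ lie in the closure of the same Weyl chamber
    (hchamber : ∀ α, (0 ≤ nν α ∧ 0 ≤ nμ α) ∨ (nν α ≤ 0 ∧ nμ α ≤ 0))
    (neg : Finset ι)   -- = {α ∈ R⁺ : xα ∈ R⁻} for any x ∈ W
    (τ : V)
    (h0 : ∀ α ∈ neg, c α (τ + ρ) ≠ 0)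
    (h1 : ∀ α ∈ neg, c α (τ + ρ + ν) ≠ 0)
    (h2 : ∀ α ∈ neg, c α (τ + ρ + ν + μ) ≠ 0) :
    Del c neg nν nμ ν μ (τ + ρ) = 1 := by
  refine prod_eq_one fun α hα => ?_
  have hb : c α (τ + ρ + ν) = c α (τ + ρ) + nν α := by rw [map_add, hν]
  have hd : c α (τ + ρ + ν + μ) = c α (τ + ρ + ν) + nμ α := by rw [map_add, hμ]
  rw [pow_abar_numerator_eq_denominator hb hd (hchamber α)]
  exact div_self <| mul_ne_zero (mul_ne_zero (pow_ne_zero _ (h0 α hα)) (pow_ne_zero _ (h1 α hα)))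
    (pow_ne_zero _ (h2 α hα))

theorem stmt11 {k V ι : Type*} [Field k] [CharZero k] [AddCommGroup V] [Module k V]
    (c : ι → V →ₗ[k] k) (ρ ν μ : V) (nν nμ : ι → ℤ)
    (hν : ∀ α, c α ν = (nν α : k)) (hμ : ∀ α, c α μ = (nμ α : k))
    -- ν and μ lie in the closure of the same Weyl chamber
    (hchamber : ∀ α, (0 ≤ nν α ∧ 0 ≤ nμ α) ∨ (nν α ≤ 0 ∧ nμ α ≤ 0))
    (neg : Finset ι)   -- = {α ∈ R⁺ : xα ∈ R⁻} for any x ∈ W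
    (τ : V)
    (h0 : ∀ α ∈ neg, c α (τ + ρ) ≠ 0)
    (h1 : ∀ α ∈ neg, c α (τ + ρ + ν) ≠ 0)
    (h2 : ∀ α ∈ neg, c α (τ + ρ + ν + μ) ≠ 0) :
    Del c neg nν nμ ν μ (τ + ρ) = 1 :=
  stmt11_general c ρ ν μ nν nμ hν hμ hchamber neg τ h0 h1 h2
end

section
/- Let ν be an integral weight, E = E(ν), and let μ_1,…,μ_m be the distinct weights of E with d_j = dim E_{μ_j}, ordered so that μ_i < μ_j implies i < j on each chain. Let M_j := ∑_{k≥j} U(n^-)(E_{μ_k} ⊗ v_τ) ⊆ E ⊗ M(τ). If for each j an element s_j of the center Z satisfies χ_{τ+μ_j}(s_j) = 0, and z_i := ∏_{j≥i} s_j, then z_i · M_i = 0 for all i; in particular, for a weight vector e ∈ E_{μ_i}, z_{i+1}·(e ⊗ v_τ) = z_{i+1}·pr_{χ(τ+μ_i)}(e ⊗ v_τ). -/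
/-!
Since χ_j(s_j) = 0, the hypothesis on the action says s_j · M_j ⊆ M_{j+1}. Applying
s_i, s_{i+1}, …, s_m in turn therefore pushes M_i down the filtration to M_{m+1} = 0.
The second claim is the first one applied to ev − prEv ∈ M_{i+1}.
-/

open Finset

theorem Submodule.prod_Ico_smul_mem {R M : Type*} [CommSemiring R] [AddCommMonoid M]
    [Module R M] {F : ℕ → Submodule R M} {s : ℕ → R} {i n : ℕ} (hin : i ≤ n)
    (hs : ∀ j ∈ Ico i n, ∀ x ∈ F j, s j • x ∈ F (j + 1)) {x : M} (hx : x ∈ F i) :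
    (∏ j ∈ Ico i n, s j) • x ∈ F n := by
  induction n, hin using Nat.le_induction with
  | base => simpa using hx
  | succ n hin ih =>
    rw [prod_Ico_succ_top hin, mul_comm, mul_smul]
    refine hs n (by simp [hin]) _ (ih fun j hj => hs j ?_)
    exact Ico_subset_Ico_right n.le_succ hj

theorem stmt14_general {k : Type*} [Field k] {Z : Type*} [CommRing Z] [Algebra k Z]
    {M : Type*} [AddCommGroup M] [Module k M] [Module Z M]
    (m : ℕ) (Msub : ℕ → Submodule Z M)
    (hchain : ∀ j, Msub (j + 1) ≤ Msub j)
    (hbot : Msub (m + 1) = ⊥)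
    (χ : ℕ → (Z →ₐ[k] k))
    -- a central element z acts on M_j/M_{j+1} by the scalar χ_j(z)
    (hact : ∀ j, 1 ≤ j → j ≤ m → ∀ z : Z, ∀ x ∈ Msub j,
      z • x - χ j z • x ∈ Msub (j + 1))
    (s : ℕ → Z) (hs : ∀ j, 1 ≤ j → j ≤ m → χ j (s j) = 0) :
    (∀ i, 1 ≤ i → ∀ x ∈ Msub i, (∏ j ∈ Finset.Icc i m, s j) • x = 0) ∧
    (∀ i, 1 ≤ i → i ≤ m → ∀ ev prEv : M, ev ∈ Msub i → ev - prEv ∈ Msub (i + 1) →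
      (∏ j ∈ Finset.Icc (i + 1) m, s j) • ev =
        (∏ j ∈ Finset.Icc (i + 1) m, s j) • prEv) := by
  have hstep : ∀ j, 1 ≤ j → j ≤ m → ∀ x ∈ Msub j, s j • x ∈ Msub (j + 1) :=
    fun j hj hjm x hx => by simpa [hs j hj hjm] using hact j hj hjm (s j) x hx
  have hkill : ∀ i, 1 ≤ i → ∀ x ∈ Msub i, (∏ j ∈ Icc i m, s j) • x = 0 := by
    intro i hi x hx
    rw [← Submodule.mem_bot Z, ← hbot]
    rcases le_or_gt i (m + 1) with him | him
    · rw [← Ico_add_one_right_eq_Icc]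
      refine Submodule.prod_Ico_smul_mem him (fun j hj => ?_) hx
      obtain ⟨hij, hjm⟩ := mem_Ico.mp hj
      exact hstep j (hi.trans hij) (Nat.le_of_lt_succ hjm)
    · rw [Icc_eq_empty (by omega), prod_empty, one_smul]
      exact antitone_nat_of_succ_le hchain him.le hx
  refine ⟨hkill, fun i _ _ ev prEv _ hdiff => ?_⟩
  rw [← sub_eq_zero, ← smul_sub]
  exact hkill (i + 1) i.succ_pos _ hdiff

theorem stmt14 {k : Type*} [Field k] {Z : Type*} [CommRing Z] [Algebra k Z]
    {M : Type*} [AddCommGroup M] [Module k M] [Module Z M] [IsScalarTower k Z M]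
    (m : ℕ) (Msub : ℕ → Submodule Z M)
    (hchain : ∀ j, Msub (j + 1) ≤ Msub j)
    (hbot : Msub (m + 1) = ⊥)
    (χ : ℕ → (Z →ₐ[k] k))
    -- a central element z acts on M_j/M_{j+1} by the scalar χ_j(z)
    (hact : ∀ j, 1 ≤ j → j ≤ m → ∀ z : Z, ∀ x ∈ Msub j,
      z • x - χ j z • x ∈ Msub (j + 1))
    (s : ℕ → Z) (hs : ∀ j, 1 ≤ j → j ≤ m → χ j (s j) = 0) :
    (∀ i, 1 ≤ i → ∀ x ∈ Msub i, (∏ j ∈ Finset.Icc i m, s j) • x = 0) ∧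
    (∀ i, 1 ≤ i → i ≤ m → ∀ ev prEv : M, ev ∈ Msub i → ev - prEv ∈ Msub (i + 1) →
      (∏ j ∈ Finset.Icc (i + 1) m, s j) • ev =
        (∏ j ∈ Finset.Icc (i + 1) m, s j) • prEv) :=
  stmt14_general m Msub hchain hbot χ hact s hs
end

section
/- Let λ₀ ∈ h* with W_{λ₀} = ⟨s_α⟩ and ⟨λ₀+ρ, α^∨⟩ ≥ 0. Suppose p ∈ P(h*) is a polynomial function such that λ₀⁺(p) ∈ (P⁺(h*))^{W_{λ₀}} · P(h*), where λ₀⁺(p)(τ) = p(τ+λ₀) and P⁺(h*) is the polynomials without constant term. Then the directional derivative of p in the direction α vanishes at λ₀, i.e. d/dt|_{t=0} p(λ₀ + tα) = 0. -/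
/-!
STATEMENT 17 (key step of Lemma "Ann"): h* is modelled as Fin d → k and
polynomial functions on h* as MvPolynomial (Fin d) k.  If
λ₀⁺(p) ∈ (P⁺(h*))^{⟨s_α⟩} · P(h*), i.e. p(λ₀ + μ) = ∑ᵢ pᵢ(μ) qᵢ(μ) for all
μ, where each pᵢ is s_α-invariant (pᵢ(s_α μ) = pᵢ(μ)) and has no constant
term (pᵢ(0) = 0), then the directional derivative of p in the direction α
vanishes at λ₀:  d/dt|_{t=0} p(λ₀ + tα) = 0.  Here s_α is the linear
reflection at the root α (s_α² = id, s_α α = −α).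
-/

open Polynomial


private lemma stmt17_eval_aeval {k : Type*} [Field k] {d : ℕ}
    (f : Fin d → k[X]) (q : MvPolynomial (Fin d) k) (t : k) :
    Polynomial.eval t (MvPolynomial.aeval f q) =
      MvPolynomial.eval (fun j => Polynomial.eval t (f j)) q := by
  induction q using MvPolynomial.induction_on with
  | C a => simp
  | add p q hp hq => simp [hp, hq]
  | mul_X p i hp => simp [hp]

theorem stmt17 {k : Type*} [Field k] [CharZero k] {d : ℕ}
    (sα : (Fin d → k) →ₗ[k] (Fin d → k))
    (hinv : sα ∘ₗ sα = LinearMap.id) (α l0 : Fin d → k) (hα : sα α = -α)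
    (p : MvPolynomial (Fin d) k) (n : ℕ)
    (ps qs : Fin n → MvPolynomial (Fin d) k)
    -- λ₀⁺(p) = ∑ pᵢ qᵢ (as polynomial functions)
    (hdecomp : ∀ μ : Fin d → k,
      MvPolynomial.eval (fun j => l0 j + μ j) p =
        ∑ i, MvPolynomial.eval μ (ps i) * MvPolynomial.eval μ (qs i))
    -- each pᵢ is s_α-invariant …
    (hInv : ∀ i, ∀ μ : Fin d → k,
      MvPolynomial.eval (sα μ) (ps i) = MvPolynomial.eval μ (ps i))
    -- … and has no constant term
    (hzero : ∀ i, MvPolynomial.eval (0 : Fin d → k) (ps i) = 0) :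
    Polynomial.eval 0 (Polynomial.derivative
      (MvPolynomial.aeval
        (fun j => Polynomial.C (l0 j) + Polynomial.C (α j) * Polynomial.X) p)) = 0 := by
  set f : Fin d → k[X] := fun j => Polynomial.C (l0 j) + Polynomial.C (α j) * Polynomial.X
  set g : Fin n → k[X] := fun i => MvPolynomial.aeval (fun j => Polynomial.C (α j) * Polynomial.X) (ps i)
  set h : Fin n → k[X] := fun i => MvPolynomial.aeval (fun j => Polynomial.C (α j) * Polynomial.X) (qs i)
  have hF : MvPolynomial.aeval f p = ∑ i, g i * h i := by
    apply Polynomial.funext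
    intro t
    rw [stmt17_eval_aeval]
    simp only [eval_finset_sum, eval_mul, stmt17_eval_aeval, f, g, h,
      eval_add, eval_mul, eval_C, eval_X]
    exact hdecomp (fun j => α j * t)
  have hgeven : ∀ i, (g i).comp (-Polynomial.X) = g i := by
    intro i
    apply Polynomial.funext
    intro t
    rw [Polynomial.eval_comp]
    simp only [eval_neg, eval_X, stmt17_eval_aeval, g, eval_mul, eval_C, eval_X]
    have h1 : (fun j => α j * -t) = sα (fun j => t * α j) := by
      have : (fun j => t * α j) = t • α := by funext j; simp [Pi.smul_apply, smul_eq_mul]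
      rw [this, map_smul, hα]
      funext j; simp [mul_comm]
    rw [h1, hInv]
    have h2 : (fun j => t * α j) = (fun j => α j * t) := by funext j; ring
    rw [h2]
  have hgd0 : ∀ i, Polynomial.eval 0 (Polynomial.derivative (g i)) = 0 := by
    intro i
    have := congrArg Polynomial.derivative (hgeven i)
    rw [Polynomial.derivative_comp] at this
    have h2 := congrArg (Polynomial.eval (0 : k)) this
    simp only [eval_mul, eval_comp, eval_neg, eval_X, neg_zero, derivative_neg,
      derivative_X, eval_neg, eval_one] at h2
    linear_combination (-(1:k)/2) * h2
  have hg0 : ∀ i, Polynomial.eval 0 (g i) = 0 := by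
    intro i
    rw [stmt17_eval_aeval]
    simp only [eval_mul, eval_C, eval_X, mul_zero]
    exact hzero i
  rw [hF, Polynomial.derivative_sum, Polynomial.eval_finset_sum]
  apply Finset.sum_eq_zero
  intro i _
  rw [Polynomial.derivative_mul, Polynomial.eval_add, Polynomial.eval_mul, Polynomial.eval_mul,
    hgd0 i, hg0 i]
  ring
end
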